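/- (Harnack-type gradient bound for eigenfunctions) Let G be a finite connected weighted graph satisfying CD(ρ, n), ρ ≤ K, K > 0, and suppose the gradient bound Γ(P_t f) ≤ (e^{KT}/t)‖f‖_∞² holds for all bounded f and t > 0. Then every eigenfunction f of L with eigenvalue λ > 0 satisfies ‖Γ f‖_∞ ≤ 2 e^{1 + TK} λ ‖f‖_∞². -/

import Mathlib

open Real ENNReal

structure WGraph (V : Type*) where
  w : V → V → ℝ
  m : V → ℝ
  symm : ∀ x y, w x y = w y x
  nonneg : ∀ x y, 0 ≤ w x y
  loopless : ∀ x, w x x = 0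
  mpos : ∀ x, 0 < m x
  locFin : ∀ x, (Function.support (w x)).Finite

namespace WGraph

variable {V : Type*} (G : WGraph V)

/-- transition weights -/
noncomputable def q (x y : V) : ℝ := G.w x y / G.m x

/-- the graph Laplacian `Δ` -/
noncomputable def lap (f : V → ℝ) (x : V) : ℝ := ∑' y, G.q x y * (f y - f x)

/-- the weighted vertex degree -/
noncomputable def deg (x : V) : ℝ := ∑' y, G.q x y

/-- the bilinear carré du champ operator `Γ(f,g)` -/
noncomputable def gammaB (f g : V → ℝ) (x : V) : ℝ :=
  (1 / 2) * (G.lap (f * g) x - f x * G.lap g x - g x * G.lap f x)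

/-- the carré du champ operator `Γ f` -/
noncomputable def gamma (f : V → ℝ) : V → ℝ := G.gammaB f f

/-- the iterated carré du champ operator `Γ₂ f` -/
noncomputable def gamma2 (f : V → ℝ) (x : V) : ℝ :=
  (1 / 2) * G.lap (G.gamma f) x - G.gammaB f (G.lap f) x

/-- boundedness of a function -/
def Bdd (f : V → ℝ) : Prop := ∃ C, ∀ x, |f x| ≤ C

/-- the variable curvature dimension condition `CD(ρ,n)` -/
def CD (ρ : V → ℝ) (n : ℝ≥0∞) : Prop :=
  ∀ f, Bdd f → ∀ x, ρ x * G.gamma f x + (n⁻¹).toReal * (G.lap f x) ^ 2 ≤ G.gamma2 f x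

/-- the underlying simple graph (for the combinatorial metric) -/
def toSimpleGraph : SimpleGraph V where
  Adj x y := 0 < G.w x y
  symm := ⟨by intro x y h; rwa [G.symm] at h⟩
  loopless := ⟨by intro x h; rw [G.loopless] at h; exact lt_irrefl 0 h⟩

/-- `P` is the semigroup `e^{-t(L+W)}` generated by `-(L+W) = Δ - W`. -/
def IsSemigroup (W : V → ℝ) (P : ℝ → (V → ℝ) → V → ℝ) : Prop :=
  (∀ f, P 0 f = f) ∧
  (∀ s t, 0 ≤ s → 0 ≤ t → ∀ f, P (s + t) f = P s (P t f)) ∧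
  (∀ t f g, P t (f + g) = P t f + P t g) ∧
  (∀ t (c : ℝ) f, P t (c • f) = c • P t f) ∧
  (∀ f, Bdd f → ∀ t, 0 ≤ t → Bdd (P t f)) ∧
  (∀ f, Bdd f → ∀ x, ContinuousOn (fun s => P s f x) (Set.Ici 0)) ∧
  (∀ f, Bdd f → ∀ x t, 0 < t →
    HasDerivAt (fun s => P s f x) (G.lap (P t f) x - W x * P t f x) t) ∧
  (∀ f, Bdd f → (∀ x, 0 ≤ f x) → ∀ t, 0 ≤ t → ∀ x, 0 ≤ P t f x)

end WGraph

section Aux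

variable {V : Type*} [Fintype V] (G : WGraph V)

lemma WGraph.lap_eq_sum (v : V → ℝ) (x : V) :
    G.lap v x = ∑ y, G.q x y * (v y - v x) := by
  rw [WGraph.lap, tsum_fintype]

lemma WGraph.lap_sub_smul (g h : V → ℝ) (c : ℝ) (x : V) :
    G.lap (fun y => g y - c * h y) x = G.lap g x - c * G.lap h x := by
  rw [WGraph.lap_eq_sum, WGraph.lap_eq_sum, WGraph.lap_eq_sum, Finset.mul_sum,
    ← Finset.sum_sub_distrib]
  exact Finset.sum_congr rfl fun y _ => by ring

lemma WGraph.lap_const_mul (c : ℝ) (h : V → ℝ) (x : V) :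
    G.lap (fun y => c * h y) x = c * G.lap h x := by
  rw [WGraph.lap_eq_sum, WGraph.lap_eq_sum, Finset.mul_sum]
  exact Finset.sum_congr rfl fun y _ => by ring

lemma WGraph.gamma_const_mul (c : ℝ) (f : V → ℝ) (x : V) :
    G.gamma (fun y => c * f y) x = c ^ 2 * G.gamma f x := by
  have h1 : ((fun y => c * f y) * fun y => c * f y) = fun y => c ^ 2 * ((f * f) y) := by
    funext y; simp [Pi.mul_apply]; ring
  simp only [WGraph.gamma, WGraph.gammaB, h1, WGraph.lap_const_mul]
  ring

/-- Dirichlet form nonnegativity: `∑ m x · v x · Δ v x ≤ 0`. -/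
lemma WGraph.dirichlet (v : V → ℝ) :
    ∑ x, G.m x * (v x * G.lap v x) ≤ 0 := by
  have hm : ∀ x, G.m x * G.lap v x = ∑ y, G.w x y * (v y - v x) := by
    intro x
    rw [WGraph.lap_eq_sum, Finset.mul_sum]
    refine Finset.sum_congr rfl fun y _ => ?_
    rw [WGraph.q]
    field_simp [(G.mpos x).ne']
  have hS : ∑ x, G.m x * (v x * G.lap v x)
      = ∑ x, ∑ y, G.w x y * (v x * (v y - v x)) := by
    refine Finset.sum_congr rfl fun x _ => ?_
    have : G.m x * (v x * G.lap v x) = v x * (G.m x * G.lap v x) := by ring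
    rw [this, hm, Finset.mul_sum]
    exact Finset.sum_congr rfl fun y _ => by ring
  set S := ∑ x, ∑ y, G.w x y * (v x * (v y - v x)) with hSdef
  have hswap : S = ∑ x, ∑ y, G.w x y * (v y * (v x - v y)) := by
    rw [hSdef, Finset.sum_comm]
    exact Finset.sum_congr rfl fun x _ => Finset.sum_congr rfl fun y _ => by rw [G.symm]
  have h2 : S + S = ∑ x, ∑ y, -(G.w x y * (v y - v x) ^ 2) := by
    nth_rewrite 2 [hswap]
    rw [hSdef, ← Finset.sum_add_distrib]
    refine Finset.sum_congr rfl fun x _ => ?_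
    rw [← Finset.sum_add_distrib]
    exact Finset.sum_congr rfl fun y _ => by ring
  have hneg : ∑ x, ∑ y, -(G.w x y * (v y - v x) ^ 2) ≤ 0 := by
    refine Finset.sum_nonpos fun x _ => Finset.sum_nonpos fun y _ => ?_
    simp only [neg_nonpos]
    exact mul_nonneg (G.nonneg x y) (sq_nonneg _)
  rw [hS]
  linarith [h2, hneg]

end Aux

open WGraph in
theorem harnack_eigenfunction {V : Type*} [Fintype V] [Nonempty V] (G : WGraph V)
    (hconn : G.toSimpleGraph.Preconnected) (ρ : V → ℝ) (n : ℝ≥0∞) (hn : n ≠ 0)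
    (hCD : G.CD ρ n) (K T : ℝ) (hK : 0 < K) (hT : 0 < T) (hρK : ∀ x, ρ x ≤ K)
    (P : ℝ → (V → ℝ) → V → ℝ) (hP : G.IsSemigroup 0 P)
    (hgrad : ∀ g : V → ℝ, ∀ t, 0 < t → ∀ x,
      G.gamma (P t g) x ≤ Real.exp (K * T) / t * (⨆ y, |g y|) ^ 2)
    (f : V → ℝ) (lam : ℝ) (hlam : 0 < lam) (hf : ∀ x, -(G.lap f x) = lam * f x) :
    ∀ x, G.gamma f x ≤ 2 * Real.exp (1 + T * K) * lam * (⨆ y, |f y|) ^ 2 := by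
  intro x₀
  obtain ⟨hP0, hPadd, hPlin, hPsmul, hPbdd, hPcont, hPderiv, hPpos⟩ := hP
  have hBddf : Bdd f :=
    ⟨⨆ y, |f y|, fun x => le_ciSup (Set.Finite.bddAbove (Set.finite_range (fun y => |f y|))) x⟩
  -- the difference function and its energy
  set u : ℝ → V → ℝ := fun s x => P s f x - Real.exp (-(lam * s)) * f x with hu
  set E : ℝ → ℝ := fun s => ∑ x, G.m x * (u s x) ^ 2 with hE
  have hu0 : ∀ x, u 0 x = 0 := by
    intro x; simp [hu, hP0 f]
  have hlapf : ∀ x, G.lap f x = -(lam * f x) := by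
    intro x; have := hf x; linarith
  -- derivative of u
  have huderiv : ∀ t, 0 < t → ∀ x,
      HasDerivAt (fun s => u s x) (G.lap (u t) x) t := by
    intro t ht x
    have h1 := hPderiv f hBddf x t ht
    have h2 : HasDerivAt (fun s => Real.exp (-(lam * s)) * f x)
        (Real.exp (-(lam * t)) * -(lam * 1) * f x) t :=
      (((hasDerivAt_id t).const_mul lam).neg.exp).mul_const (f x)
    have h3 := h1.sub h2
    have h4 : G.lap (u t) x = G.lap (P t f) x - Real.exp (-(lam * t)) * G.lap f x := by
      have : u t = fun y => P t f y - Real.exp (-(lam * t)) * f y := rfl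
      rw [this, G.lap_sub_smul]
    have h5 : G.lap (P t f) x - 0 * P t f x - Real.exp (-(lam * t)) * -(lam * 1) * f x
        = G.lap (u t) x := by
      rw [h4, hlapf]; ring
    exact h5 ▸ h3
  -- continuity of u
  have hucont : ∀ x, ContinuousOn (fun s => u s x) (Set.Ici 0) := by
    intro x
    exact (hPcont f hBddf x).sub
      (((Real.continuous_exp.comp ((continuous_const.mul continuous_id).neg)).mul
        continuous_const).continuousOn)
  -- energy is continuous, differentiable with nonpositive derivative
  have hEcont : ContinuousOn E (Set.Ici 0) := by
    apply continuousOn_finset_sum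
    intro x _
    exact continuousOn_const.mul ((hucont x).pow 2)
  have hEderiv : ∀ t, 0 < t →
      HasDerivAt E (∑ x, G.m x * ((2 : ℕ) * u t x ^ 1 * G.lap (u t) x)) t := by
    intro t ht
    exact HasDerivAt.fun_sum fun x _ => (((huderiv t ht x).pow 2)).const_mul (G.m x)
  have hint : interior (Set.Ici (0:ℝ)) = Set.Ioi 0 := interior_Ici
  have hEdiff : DifferentiableOn ℝ E (interior (Set.Ici (0:ℝ))) := by
    rw [hint]
    intro t ht
    exact ((hEderiv t ht).differentiableAt).differentiableWithinAt
  have hEd0 : ∀ t ∈ interior (Set.Ici (0:ℝ)), deriv E t ≤ 0 := by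
    rw [hint]
    intro t ht
    rw [(hEderiv t ht).deriv]
    have key := G.dirichlet (u t)
    have : (∑ x, G.m x * ((2 : ℕ) * u t x ^ 1 * G.lap (u t) x))
        = 2 * ∑ x, G.m x * (u t x * G.lap (u t) x) := by
      rw [Finset.mul_sum]
      exact Finset.sum_congr rfl fun x _ => by push_cast; ring
    rw [this]
    linarith
  have hEanti : AntitoneOn E (Set.Ici 0) :=
    antitoneOn_of_deriv_nonpos (convex_Ici 0) hEcont hEdiff hEd0
  -- P t f = e^{-λt} f for t > 0
  have hkey : ∀ t, 0 < t → ∀ x, P t f x = Real.exp (-(lam * t)) * f x := by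
    intro t ht x
    have hE0 : E 0 = 0 := by
      simp only [hE]
      exact Finset.sum_eq_zero fun x _ => by rw [hu0 x]; ring
    have hle : E t ≤ 0 := by
      have := hEanti (Set.self_mem_Ici) (Set.mem_Ici.mpr ht.le) ht.le
      linarith [this, hE0.le, hE0.ge]
    have hterm : G.m x * (u t x) ^ 2 ≤ 0 := by
      have h1 : ∀ y ∈ Finset.univ, y ≠ x → (0:ℝ) ≤ G.m y * (u t y) ^ 2 :=
        fun y _ _ => mul_nonneg (G.mpos y).le (sq_nonneg _)
      have := Finset.single_le_sum (f := fun y => G.m y * (u t y) ^ 2)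
        (fun y _ => mul_nonneg (G.mpos y).le (sq_nonneg _)) (Finset.mem_univ x)
      exact le_trans this hle
    have hux : u t x = 0 := by
      have h2 : u t x ^ 2 ≤ 0 := by nlinarith [G.mpos x, sq_nonneg (u t x)]
      have h3 : u t x ^ 2 = 0 := le_antisymm h2 (sq_nonneg _)
      exact sq_eq_zero_iff.mp h3
    have : P t f x - Real.exp (-(lam * t)) * f x = 0 := hux
    linarith
  -- apply the gradient bound at t = 1/(2λ)
  set t₀ : ℝ := (2 * lam)⁻¹ with ht₀
  have ht₀pos : 0 < t₀ := by positivity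
  have hPt₀ : P t₀ f = fun y => Real.exp (-(lam * t₀)) * f y :=
    funext fun y => hkey t₀ ht₀pos y
  have hg := hgrad f t₀ ht₀pos x₀
  rw [hPt₀, G.gamma_const_mul] at hg
  have hlt : lam * t₀ = 1 / 2 := by
    rw [ht₀]; field_simp
  have hexp : Real.exp (-(lam * t₀)) ^ 2 = Real.exp (-1) := by
    rw [hlt, ← Real.exp_nat_mul]
    norm_num
  rw [hexp] at hg
  have hdiv : Real.exp (K * T) / t₀ = Real.exp (K * T) * (2 * lam) := by
    rw [ht₀, div_eq_mul_inv, inv_inv]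
  rw [hdiv] at hg
  -- conclude
  have he1 : Real.exp 1 * Real.exp (-1) = 1 := by
    rw [← Real.exp_add]; norm_num
  have hexp1 : Real.exp (1 + T * K) = Real.exp 1 * Real.exp (K * T) := by
    rw [← Real.exp_add, mul_comm T K]
  have hmul := mul_le_mul_of_nonneg_left hg (Real.exp_pos 1).le
  calc G.gamma f x₀ = Real.exp 1 * (Real.exp (-1) * G.gamma f x₀) := by
        rw [← mul_assoc, he1, one_mul]
    _ ≤ Real.exp 1 * (Real.exp (K * T) * (2 * lam) * (⨆ y, |f y|) ^ 2) := hmul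
    _ = 2 * Real.exp (1 + T * K) * lam * (⨆ y, |f y|) ^ 2 := by
        rw [hexp1]; ring
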